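/- Let k and ℓ be integers with 2 ≤ k ≤ ℓ and let F_{k,ℓ} be the graph described in the context. Then every total dominating set of F_{k,ℓ} that contains neither u nor v has at least 2(k+ℓ−2) vertices. -/

import Mathlib

/-! Since `u, v ∉ D`, every triangle vertex is dominated from inside its own triangle. Dominating
a vertex of the `i`-th triangle gives some `t_{i,j} ∈ D`, and dominating `t_{i,j}` gives another
`t_{i,j'} ∈ D` with `j' ≠ j`; so `D` meets each of the `k + ℓ - 2` triangles in at least two
vertices. -/

/-- Vertices of `F_{k,ℓ}`: triangle vertices `t_{i,j}` as `Sum.inl (i,j)`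
(0-indexed, `i : Fin (k+ℓ-2)`, `j : Fin 3`), and `u = Sum.inr false`,
`v = Sum.inr true`. -/
abbrev FklV (k l : ℕ) := (Fin (k + l - 2) × Fin 3) ⊕ Bool

/-- Edge relation of `F_{k,ℓ}`: triangles on each `t_{i,·}`; `u` adjacent to
`t_{i,1}`, `t_{i,2}` (0-indexed `j ∈ {0,1}`) for all `i` and to `t_{i,3}` for
`i ≥ k` (0-indexed `k-1 ≤ i.val`); `v` adjacent to `t_{i,1}`, `t_{i,2}` for
all `i` and to `t_{i,3}` for `i ≤ k-1` (0-indexed `i.val < k-1`); `u` and `v`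
nonadjacent. -/
def FklRel (k l : ℕ) : FklV k l → FklV k l → Prop
  | .inl p, .inl q => p.1 = q.1
  | .inr false, .inl p =>
      p.2.val = 0 ∨ p.2.val = 1 ∨ (k - 1 ≤ p.1.val ∧ p.2.val = 2)
  | .inr true, .inl p =>
      p.2.val = 0 ∨ p.2.val = 1 ∨ (p.1.val < k - 1 ∧ p.2.val = 2)
  | _, _ => False

/-- The graph `F_{k,ℓ}`. -/
def Fkl (k l : ℕ) : SimpleGraph (FklV k l) := SimpleGraph.fromRel (FklRel k l)

/-- `D` is a total dominating set of `G`. -/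
def IsTotalDomSet {V : Type*} (G : SimpleGraph V) (D : Finset V) : Prop :=
  ∀ v : V, ∃ d ∈ D, G.Adj v d

open Finset

theorem Fkl_adj_inl_inl_iff {k l : ℕ} {p q : Fin (k + l - 2) × Fin 3} :
    (Fkl k l).Adj (.inl p) (.inl q) ↔ p ≠ q ∧ p.1 = q.1 := by
  simp only [Fkl, SimpleGraph.fromRel_adj, FklRel, ne_eq, Sum.inl.injEq, eq_comm (a := q.1),
    or_self]

section TotalDomSet

variable {k l : ℕ} {D : Finset (FklV k l)}

theorem IsTotalDomSet.exists_mem_toLeft_of_fst_eq (hD : IsTotalDomSet (Fkl k l) D)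
    (hu : (Sum.inr false : FklV k l) ∉ D) (hv : (Sum.inr true : FklV k l) ∉ D)
    (p : Fin (k + l - 2) × Fin 3) : ∃ q ∈ D.toLeft, p ≠ q ∧ p.1 = q.1 := by
  obtain ⟨d, hdD, hadj⟩ := hD (.inl p)
  match d, hdD, hadj with
  | .inl q, hqD, hadj => exact ⟨q, mem_toLeft.mpr hqD, Fkl_adj_inl_inl_iff.mp hadj⟩
  | .inr false, hdD, _ => exact absurd hdD hu
  | .inr true, hdD, _ => exact absurd hdD hv

theorem IsTotalDomSet.two_le_card_triangle (hD : IsTotalDomSet (Fkl k l) D)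
    (hu : (Sum.inr false : FklV k l) ∉ D) (hv : (Sum.inr true : FklV k l) ∉ D)
    (i : Fin (k + l - 2)) : 2 ≤ #{p ∈ D.toLeft | p.1 = i} := by
  obtain ⟨q, hqD, -, hq⟩ := hD.exists_mem_toLeft_of_fst_eq hu hv (i, 0)
  obtain ⟨q', hq'D, hqq', hq'⟩ := hD.exists_mem_toLeft_of_fst_eq hu hv q
  exact one_lt_card.mpr
    ⟨q, mem_filter.mpr ⟨hqD, hq.symm⟩, q', mem_filter.mpr ⟨hq'D, hq' ▸ hq.symm⟩, hqq'⟩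

end TotalDomSet

theorem stmt17_general (k l : ℕ)
    (D : Finset (FklV k l)) (hD : IsTotalDomSet (Fkl k l) D)
    (hu : (Sum.inr false : FklV k l) ∉ D)
    (hv : (Sum.inr true : FklV k l) ∉ D) :
    2 * (k + l - 2) ≤ D.card := by
  calc 2 * (k + l - 2) = 2 * #(univ : Finset (Fin (k + l - 2))) := by
        rw [card_univ, Fintype.card_fin]
    _ ≤ #D.toLeft := mul_card_image_le_card_of_maps_to (f := Prod.fst) (fun _ _ ↦ mem_univ _) 2
        fun i _ ↦ hD.two_le_card_triangle hu hv i
    _ ≤ #D := card_toLeft_le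

/-- Every total dominating set of `F_{k,ℓ}` containing neither `u` nor `v`
has at least `2(k+ℓ-2)` vertices. -/
theorem stmt17 (k l : ℕ) (hk : 2 ≤ k) (hkl : k ≤ l)
    (D : Finset (FklV k l)) (hD : IsTotalDomSet (Fkl k l) D)
    (hu : (Sum.inr false : FklV k l) ∉ D)
    (hv : (Sum.inr true : FklV k l) ∉ D) :
    2 * (k + l - 2) ≤ D.card :=
  stmt17_general k l D hD hu hv
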